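/- In ℚ[SL₂(F)], the idempotent π₃ induces a character of the support-class algebra with values A ↦ q−1, B ↦ 1−q, C ↦ 0, D₊ ↦ 1−q, D₋ ↦ 1−q, E₊ ↦ q−1, E₋ ↦ q−1; concretely: A·π₃ = (q−1)·π₃, B·π₃ = (1−q)·π₃, C·π₃ = 0, D₊·π₃ = (1−q)·π₃, D₋·π₃ = (1−q)·π₃, E₊·π₃ = (q−1)·π₃, and E₋·π₃ = (q−1)·π₃. -/

import Mathlib

open MonoidAlgebra

/-- Sum of all elements of `SL₂(F)` whose support pattern is given by the four
Booleans (`true` = the entry is nonzero, `false` = the entry is zero). -/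
noncomputable def suppClass (R : Type*) [CommRing R] (F : Type*) [Field F] [Fintype F]
    [DecidableEq F] (b₁₁ b₁₂ b₂₁ b₂₂ : Bool) :
    MonoidAlgebra R (Matrix.SpecialLinearGroup (Fin 2) F) :=
  ∑ g ∈ Finset.univ.filter
      (fun g : Matrix.SpecialLinearGroup (Fin 2) F =>
        (b₁₁ = true ↔ (g : Matrix (Fin 2) (Fin 2) F) 0 0 ≠ 0) ∧
        (b₁₂ = true ↔ (g : Matrix (Fin 2) (Fin 2) F) 0 1 ≠ 0) ∧
        (b₂₁ = true ↔ (g : Matrix (Fin 2) (Fin 2) F) 1 0 ≠ 0) ∧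
        (b₂₂ = true ↔ (g : Matrix (Fin 2) (Fin 2) F) 1 1 ≠ 0)),
    MonoidAlgebra.of R (Matrix.SpecialLinearGroup (Fin 2) F) g

/-- The support class `A` (diagonal matrices). -/
noncomputable def elA (R : Type*) [CommRing R] (F : Type*) [Field F] [Fintype F] [DecidableEq F] :=
  suppClass R F true false false true
/-- The support class `B` (antidiagonal matrices). -/
noncomputable def elB (R : Type*) [CommRing R] (F : Type*) [Field F] [Fintype F] [DecidableEq F] :=
  suppClass R F false true true false
/-- The support class `C` (matrices with all entries nonzero). -/
noncomputable def elC (R : Type*) [CommRing R] (F : Type*) [Field F] [Fintype F] [DecidableEq F] :=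
  suppClass R F true true true true
/-- The support class `D₊` (upper triangular with nonzero entries). -/
noncomputable def elDp (R : Type*) [CommRing R] (F : Type*) [Field F] [Fintype F] [DecidableEq F] :=
  suppClass R F true true false true
/-- The support class `D₋` (lower triangular with nonzero entries). -/
noncomputable def elDm (R : Type*) [CommRing R] (F : Type*) [Field F] [Fintype F] [DecidableEq F] :=
  suppClass R F true false true true
/-- The support class `E₊`. -/
noncomputable def elEp (R : Type*) [CommRing R] (F : Type*) [Field F] [Fintype F] [DecidableEq F] :=
  suppClass R F true true true false
/-- The support class `E₋`. -/
noncomputable def elEm (R : Type*) [CommRing R] (F : Type*) [Field F] [Fintype F] [DecidableEq F] :=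
  suppClass R F false true true true

/-!
Left multiplication by a diagonal matrix preserves every support pattern and the Weyl element
`w = !![0, -1; 1, 0]` swaps the two rows, so `π₃` is fixed by the torus and negated by `w`.
It is also killed by the sum `U` of the upper unipotent matrices: left multiplication by
unipotents acts simply transitively on the fibres of the bottom row, which gives `U A = A + D₊`,
`U U = q U` and `U D₋ = U E₋`; writing `π₃ = Y (1 - w)` with `Y = c₁ A - c₂ (D₊ + D₋)`, the first
two make `U Y` a multiple of `U D₋`, and the third kills it after multiplication by `1 - w`
(as `D₋ w = E₋`).
Any element with these three properties is a common eigenvector of the support classes: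
`B = w A`, `D₊ = U A - A`, `E₊ = D₊ w`, `E₋ = w D₊`, `D₋ = w E₊`, and the sum of all group
elements, `A + B + C + D₊ + D₋ + E₊ + E₋`, kills it because it absorbs `w`.
-/

open MatrixGroups

section GroupAlgebra

variable {R G : Type*} [CommSemiring R] [Group G]

theorem MonoidAlgebra.of_mul_sum_of {s t : Finset G} {g : G} (h : ∀ x, g * x ∈ t ↔ x ∈ s) :
    of R G g * ∑ x ∈ s, of R G x = ∑ x ∈ t, of R G x := by
  simp_rw [Finset.mul_sum, ← map_mul]
  exact Finset.sum_nbij' (g * ·) (g⁻¹ * ·) (fun x hx => (h x).2 hx)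
    (fun y hy => (h _).1 (by simpa using hy)) (by simp) (by simp) (by simp)

theorem MonoidAlgebra.sum_of_mul_of {s t : Finset G} {g : G} (h : ∀ x, x * g ∈ t ↔ x ∈ s) :
    (∑ x ∈ s, of R G x) * of R G g = ∑ x ∈ t, of R G x := by
  simp_rw [Finset.sum_mul, ← map_mul]
  exact Finset.sum_nbij' (· * g) (· * g⁻¹) (fun x hx => (h x).2 hx)
    (fun y hy => (h _).1 (by simpa using hy)) (by simp) (by simp) (by simp)

theorem MonoidAlgebra.sum_univ_of_mul_of [Fintype G] (g : G) :
    (∑ x, of R G x) * of R G g = ∑ x, of R G x :=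
  sum_of_mul_of (by simp)

theorem MonoidAlgebra.coeff_sum_of_apply [DecidableEq G] (s : Finset G) (g : G) :
    (∑ x ∈ s, of R G x).coeff g = if g ∈ s then 1 else 0 := by
  simp [coeff_sum, Finsupp.single_apply]

end GroupAlgebra

namespace Matrix.SpecialLinearGroup

variable {F : Type*} [Field F]

theorem det_fin_two_eq_one (g : SL(2, F)) : g 0 0 * g 1 1 - g 0 1 * g 1 0 = 1 := by
  have := g.2
  rwa [det_fin_two] at this

theorem mul_apply_fin_two (g h : SL(2, F)) (i j : Fin 2) :
    (g * h) i j = g i 0 * h 0 j + g i 1 * h 1 j := by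
  simp [coe_mul, mul_apply, Fin.sum_univ_two]

theorem diag_ne_zero_or_antidiag_ne_zero (g : SL(2, F)) :
    (g 0 0 ≠ 0 ∧ g 1 1 ≠ 0) ∨ (g 0 1 ≠ 0 ∧ g 1 0 ≠ 0) := by
  rw [← mul_ne_zero_iff, ← mul_ne_zero_iff]
  by_contra! h
  simpa [h.1, h.2] using det_fin_two_eq_one g

theorem apply_one_ne_zero_of_apply_zero_eq_zero {g : SL(2, F)} {j : Fin 2} (hg : g 0 j = 0) :
    g 1 j ≠ 0 := by
  intro h
  have := det_fin_two_eq_one g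
  fin_cases j <;> simp_all

/-- `!![1, x; 0, 1]` -/
def unipotent (x : F) : SL(2, F) := transvection zero_ne_one x

def weyl : SL(2, F) := ⟨!![0, -1; 1, 0], by simp [det_fin_two]⟩

theorem unipotent_mul_apply_zero (x : F) (g : SL(2, F)) (j : Fin 2) :
    (unipotent x * g) 0 j = g 0 j + x * g 1 j := by
  simp [unipotent, transvection_coe, Matrix.add_mul]

theorem unipotent_mul_apply_one (x : F) (g : SL(2, F)) : (unipotent x * g) 1 = g 1 := by
  ext j
  simp [unipotent, transvection_coe, Matrix.add_mul]

theorem unipotent_add (x y : F) : unipotent (x + y) = unipotent x * unipotent y :=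
  transvection_add _ x y

theorem unipotent_injective : Function.Injective (unipotent : F → SL(2, F)) := by
  intro x y h
  simpa [unipotent, transvection_coe] using congr_arg (fun g : SL(2, F) => g 0 1) h

theorem exists_eq_unipotent_mul_of_apply_one_eq {g h : SL(2, F)} (hgh : g 1 = h 1) :
    ∃ x, h = unipotent x * g := by
  refine ⟨g 0 0 * h 0 1 - h 0 0 * g 0 1, ext _ _ <| Fin.forall_fin_two.2 ⟨?_, fun j => ?_⟩⟩
  · have hg := det_fin_two_eq_one g
    have hh := det_fin_two_eq_one h
    rw [← congr_fun hgh 0, ← congr_fun hgh 1] at hh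
    refine Fin.forall_fin_two.2 ⟨?_, ?_⟩ <;> rw [unipotent_mul_apply_zero]
    · linear_combination g 0 0 * hh - h 0 0 * hg
    · linear_combination g 0 1 * hh - h 0 1 * hg
  · rw [unipotent_mul_apply_one, hgh]

theorem exists_apply_zero_eq_zero_and_apply_one_eq_iff (g : SL(2, F)) (j : Fin 2)
    (P : (Fin 2 → F) → Prop) :
    (∃ a : SL(2, F), (a 0 j = 0 ∧ P (a 1)) ∧ a 1 = g 1) ↔ g 1 j ≠ 0 ∧ P (g 1) := by
  constructor
  · rintro ⟨a, ⟨ha, hP⟩, hag⟩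
    rw [← hag]
    exact ⟨apply_one_ne_zero_of_apply_zero_eq_zero ha, hP⟩
  · rintro ⟨hg, hP⟩
    refine ⟨unipotent (-(g 0 j / g 1 j)) * g, ⟨?_, ?_⟩, unipotent_mul_apply_one _ g⟩
    · rw [unipotent_mul_apply_zero]
      field_simp
      ring
    · rwa [unipotent_mul_apply_one]

theorem injOn_apply_one (j : Fin 2) : Set.InjOn (fun g : SL(2, F) => g 1) {g | g 0 j = 0} := by
  intro g hg h hh hgh
  obtain ⟨x, rfl⟩ := exists_eq_unipotent_mul_of_apply_one_eq hgh
  have : x * g 1 j = 0 := by simpa [unipotent_mul_apply_zero, hg.out] using hh.out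
  rw [(mul_eq_zero.1 this).resolve_right (apply_one_ne_zero_of_apply_zero_eq_zero hg.out)]
  simp [unipotent, transvection_coeff_zero]

end Matrix.SpecialLinearGroup

open Matrix.SpecialLinearGroup

namespace SL2SupportClass

section UnipotentSum

variable (R F : Type*) [CommRing R] [Field F] [Fintype F]

noncomputable def unipotentSum : MonoidAlgebra R SL(2, F) := ∑ x : F, of R _ (unipotent x)

variable {R F}

theorem unipotentSum_mul_of_unipotent (y : F) :
    unipotentSum R F * of R _ (unipotent y) = unipotentSum R F := by
  simp_rw [unipotentSum, Finset.sum_mul, ← map_mul, ← unipotent_add]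
  exact Fintype.sum_equiv (Equiv.addRight y) _ _ fun _ => rfl

theorem unipotentSum_mul_self :
    unipotentSum R F * unipotentSum R F = (Fintype.card F : R) • unipotentSum R F := by
  calc unipotentSum R F * unipotentSum R F
      = ∑ y : F, unipotentSum R F * of R _ (unipotent y) := Finset.mul_sum _ _ _
    _ = _ := by
      rw [Finset.sum_congr rfl fun y _ => unipotentSum_mul_of_unipotent y, Finset.sum_const,
        Finset.card_univ, Nat.cast_smul_eq_nsmul]

/-- Left multiplication by the unipotents acts simply transitively on each fibre of the bottom
row, and a set of matrices with a common zero entry in the top row meets each fibre at most once. -/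
theorem unipotentSum_mul_sum_of_apply_zero_eq_zero [DecidableEq F] {s : Finset SL(2, F)}
    {j : Fin 2} (hs : ∀ a ∈ s, a 0 j = 0) :
    unipotentSum R F * ∑ a ∈ s, of R _ a = ∑ g with ∃ a ∈ s, a 1 = g 1, of R _ g := by
  simp_rw [unipotentSum, Finset.sum_mul_sum, ← map_mul, ← Finset.sum_product']
  refine Finset.sum_bij (fun p _ => unipotent p.1 * p.2) ?_ ?_ ?_ (fun _ _ => rfl)
  · intro p hp
    simp only [Finset.mem_filter, Finset.mem_univ, true_and]
    exact ⟨p.2, (Finset.mem_product.1 hp).2, (unipotent_mul_apply_one _ _).symm⟩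
  · intro p hp p' hp' hpp'
    have hrow := congr_arg (fun g : SL(2, F) => g 1) hpp'
    simp only [unipotent_mul_apply_one] at hrow
    have h2 : p.2 = p'.2 := injOn_apply_one j (hs _ (Finset.mem_product.1 hp).2)
      (hs _ (Finset.mem_product.1 hp').2) hrow
    rw [h2, mul_left_inj] at hpp'
    exact Prod.ext (unipotent_injective hpp') h2
  · intro g hg
    simp only [Finset.mem_filter, Finset.mem_univ, true_and] at hg
    obtain ⟨a, ha, hag⟩ := hg
    obtain ⟨x, rfl⟩ := exists_eq_unipotent_mul_of_apply_one_eq hag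
    exact ⟨(x, a), Finset.mem_product.2 ⟨Finset.mem_univ _, ha⟩, rfl⟩

end UnipotentSum

section SupportClass

variable {R F : Type*} [CommRing R] [Field F] [Fintype F] [DecidableEq F]

variable (F) in
def supportSet (b₁₁ b₁₂ b₂₁ b₂₂ : Bool) : Finset SL(2, F) :=
  Finset.univ.filter fun g : SL(2, F) =>
    (b₁₁ = true ↔ g 0 0 ≠ 0) ∧ (b₁₂ = true ↔ g 0 1 ≠ 0) ∧
    (b₂₁ = true ↔ g 1 0 ≠ 0) ∧ (b₂₂ = true ↔ g 1 1 ≠ 0)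

theorem suppClass_eq_sum (b₁₁ b₁₂ b₂₁ b₂₂ : Bool) :
    suppClass R F b₁₁ b₁₂ b₂₁ b₂₂ = ∑ g ∈ supportSet F b₁₁ b₁₂ b₂₁ b₂₂, of R _ g :=
  rfl

@[simp]
theorem mem_supportSet {b₁₁ b₁₂ b₂₁ b₂₂ : Bool} {g : SL(2, F)} :
    g ∈ supportSet F b₁₁ b₁₂ b₂₁ b₂₂ ↔
      (b₁₁ = true ↔ g 0 0 ≠ 0) ∧ (b₁₂ = true ↔ g 0 1 ≠ 0) ∧
      (b₂₁ = true ↔ g 1 0 ≠ 0) ∧ (b₂₂ = true ↔ g 1 1 ≠ 0) := by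
  simp [supportSet]

theorem coeff_suppClass (b₁₁ b₁₂ b₂₁ b₂₂ : Bool) (g : SL(2, F)) :
    (suppClass R F b₁₁ b₁₂ b₂₁ b₂₂).coeff g = if g ∈ supportSet F b₁₁ b₁₂ b₂₁ b₂₂ then 1 else 0 :=
  coeff_sum_of_apply _ g

theorem mem_supportSet_A_iff {g : SL(2, F)} :
    g ∈ supportSet F true false false true ↔ g 0 1 = 0 ∧ g 1 0 = 0 := by
  have := diag_ne_zero_or_antidiag_ne_zero g
  by_cases h01 : g 0 1 = 0 <;> by_cases h10 : g 1 0 = 0 <;> simp_all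

theorem mem_supportSet_Dm_iff {g : SL(2, F)} :
    g ∈ supportSet F true false true true ↔ g 0 1 = 0 ∧ g 1 0 ≠ 0 := by
  have := diag_ne_zero_or_antidiag_ne_zero g
  by_cases h01 : g 0 1 = 0 <;> by_cases h10 : g 1 0 = 0 <;> simp_all

theorem mem_supportSet_Em_iff {g : SL(2, F)} :
    g ∈ supportSet F false true true true ↔ g 0 0 = 0 ∧ g 1 1 ≠ 0 := by
  have := diag_ne_zero_or_antidiag_ne_zero g
  by_cases h00 : g 0 0 = 0 <;> by_cases h11 : g 1 1 = 0 <;> simp_all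

theorem weyl_mul_mem_supportSet {b₁₁ b₁₂ b₂₁ b₂₂ : Bool} {g : SL(2, F)} :
    weyl * g ∈ supportSet F b₁₁ b₁₂ b₂₁ b₂₂ ↔ g ∈ supportSet F b₂₁ b₂₂ b₁₁ b₁₂ := by
  simp only [mem_supportSet, mul_apply_fin_two]
  simp [weyl]
  tauto

theorem mul_weyl_mem_supportSet {b₁₁ b₁₂ b₂₁ b₂₂ : Bool} {g : SL(2, F)} :
    g * weyl ∈ supportSet F b₁₁ b₁₂ b₂₁ b₂₂ ↔ g ∈ supportSet F b₁₂ b₁₁ b₂₂ b₂₁ := by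
  simp only [mem_supportSet, mul_apply_fin_two]
  simp [weyl]
  tauto

theorem diag2_mul_mem_supportSet {a : F} (ha : a ≠ 0) {b₁₁ b₁₂ b₂₁ b₂₂ : Bool} {g : SL(2, F)} :
    diag2 a ha * g ∈ supportSet F b₁₁ b₁₂ b₂₁ b₂₂ ↔ g ∈ supportSet F b₁₁ b₁₂ b₂₁ b₂₂ := by
  simp [mul_apply_fin_two, diag2_coe', ha]

variable (R)

theorem of_weyl_mul_suppClass (b₁₁ b₁₂ b₂₁ b₂₂ : Bool) :
    of R _ weyl * suppClass R F b₁₁ b₁₂ b₂₁ b₂₂ = suppClass R F b₂₁ b₂₂ b₁₁ b₁₂ :=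
  of_mul_sum_of fun _ => weyl_mul_mem_supportSet

theorem suppClass_mul_of_weyl (b₁₁ b₁₂ b₂₁ b₂₂ : Bool) :
    suppClass R F b₁₁ b₁₂ b₂₁ b₂₂ * of R _ weyl = suppClass R F b₁₂ b₁₁ b₂₂ b₂₁ :=
  sum_of_mul_of fun _ => mul_weyl_mem_supportSet

theorem of_diag2_mul_suppClass {a : F} (ha : a ≠ 0) (b₁₁ b₁₂ b₂₁ b₂₂ : Bool) :
    of R _ (diag2 a ha) * suppClass R F b₁₁ b₁₂ b₂₁ b₂₂ = suppClass R F b₁₁ b₁₂ b₂₁ b₂₂ :=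
  of_mul_sum_of fun _ => diag2_mul_mem_supportSet ha

theorem elA_eq_sum_diag2 : elA R F = ∑ t : Fˣ, of R _ (diag2 (t : F) (Units.ne_zero t)) := by
  rw [elA, suppClass_eq_sum]
  symm
  refine Finset.sum_bij (fun t _ => diag2 (t : F) (Units.ne_zero t)) ?_ ?_ ?_ fun _ _ => rfl
  · simp [diag2_coe']
  · intro t _ t' _ h
    exact Units.ext (by simpa [diag2_coe'] using congr_arg (fun g : SL(2, F) => g 0 0) h)
  · intro g hg
    rw [mem_supportSet_A_iff] at hg
    obtain ⟨a, b, ha, rfl⟩ := fin_two_exists_eq_mk_of_apply_zero_one_eq_zero g hg.2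
    refine ⟨Units.mk0 a ha, Finset.mem_univ _, Subtype.ext ?_⟩
    simp_all [diag2_coe']

theorem sum_univ_of_eq_sum_suppClass :
    ∑ g, of R SL(2, F) g =
      elA R F + elB R F + elC R F + elDp R F + elDm R F + elEp R F + elEm R F := by
  refine MonoidAlgebra.ext (Finsupp.ext fun g => ?_)
  simp only [elA, elB, elC, elDp, elDm, elEp, elEm, coeff_add, Finsupp.add_apply,
    coeff_suppClass, coeff_sum_of_apply, Finset.mem_univ, if_true, mem_supportSet]
  have := diag_ne_zero_or_antidiag_ne_zero g
  by_cases h00 : g 0 0 = 0 <;> by_cases h01 : g 0 1 = 0 <;> by_cases h10 : g 1 0 = 0 <;>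
    by_cases h11 : g 1 1 = 0 <;> simp_all

theorem unipotentSum_mul_elA : unipotentSum R F * elA R F = elA R F + elDp R F := by
  rw [elA, suppClass_eq_sum, unipotentSum_mul_sum_of_apply_zero_eq_zero (j := 1)
    fun a ha => (mem_supportSet_A_iff.1 ha).1]
  refine MonoidAlgebra.ext (Finsupp.ext fun g => ?_)
  simp only [elDp, coeff_add, Finsupp.add_apply, coeff_suppClass, coeff_sum_of_apply,
    Finset.mem_filter, Finset.mem_univ, true_and, mem_supportSet_A_iff,
    exists_apply_zero_eq_zero_and_apply_one_eq_iff g 1 (fun v => v 0 = 0)]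
  have := diag_ne_zero_or_antidiag_ne_zero g
  by_cases h00 : g 0 0 = 0 <;> by_cases h01 : g 0 1 = 0 <;> by_cases h10 : g 1 0 = 0 <;>
    by_cases h11 : g 1 1 = 0 <;> simp_all

theorem unipotentSum_mul_elDm_eq_mul_elEm :
    unipotentSum R F * elDm R F = unipotentSum R F * elEm R F := by
  rw [elDm, elEm, suppClass_eq_sum, suppClass_eq_sum,
    unipotentSum_mul_sum_of_apply_zero_eq_zero fun a ha => (mem_supportSet_Dm_iff.1 ha).1,
    unipotentSum_mul_sum_of_apply_zero_eq_zero fun a ha => (mem_supportSet_Em_iff.1 ha).1]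
  refine Finset.sum_congr (Finset.filter_congr fun g _ => ?_) fun _ _ => rfl
  simp only [mem_supportSet_Dm_iff, mem_supportSet_Em_iff]
  rw [exists_apply_zero_eq_zero_and_apply_one_eq_iff g 1 (fun v => v 0 ≠ 0),
    exists_apply_zero_eq_zero_and_apply_one_eq_iff g 0 (fun v => v 1 ≠ 0), and_comm]

theorem elDp_eq_unipotentSum_mul_elA_sub :
    elDp R F = unipotentSum R F * elA R F - elA R F := by
  rw [unipotentSum_mul_elA]
  abel

theorem unipotentSum_mul_elDp :
    unipotentSum R F * elDp R F = ((Fintype.card F : R) - 1) • (elA R F + elDp R F) := by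
  conv_lhs => rw [elDp_eq_unipotentSum_mul_elA_sub]
  rw [mul_sub, ← mul_assoc, unipotentSum_mul_self, smul_mul_assoc, unipotentSum_mul_elA]
  module

end SupportClass

section Pi3

variable (R F : Type*) [CommRing R] [Field F] [Fintype F] [DecidableEq F]

noncomputable def pi3Combination (c₁ c₂ : R) : MonoidAlgebra R SL(2, F) :=
  c₁ • (elA R F - elB R F) + c₂ • (-elDp R F - elDm R F + elEp R F + elEm R F)

variable {R F}

theorem of_diag2_mul_pi3Combination (c₁ c₂ : R) {a : F} (ha : a ≠ 0) :
    of R _ (diag2 a ha) * pi3Combination R F c₁ c₂ = pi3Combination R F c₁ c₂ := by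
  simp only [pi3Combination, elA, elB, elDp, elDm, elEp, elEm, mul_add, mul_sub, mul_neg,
    mul_smul_comm, of_diag2_mul_suppClass]

theorem of_weyl_mul_pi3Combination (c₁ c₂ : R) :
    of R _ weyl * pi3Combination R F c₁ c₂ = -pi3Combination R F c₁ c₂ := by
  simp only [pi3Combination, elA, elB, elDp, elDm, elEp, elEm, mul_add, mul_sub, mul_neg,
    mul_smul_comm, of_weyl_mul_suppClass]
  module

theorem unipotentSum_mul_pi3Combination {c₁ c₂ : R}
    (h : c₁ = ((Fintype.card F : R) - 1) * c₂) :
    unipotentSum R F * pi3Combination R F c₁ c₂ = 0 := by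
  set y := c₁ • elA R F - c₂ • elDp R F - c₂ • elDm R F
  have hπ : pi3Combination R F c₁ c₂ = y - y * of R _ weyl := by
    simp only [y, pi3Combination, elA, elB, elDp, elDm, elEp, elEm, sub_mul, smul_mul_assoc,
      suppClass_mul_of_weyl]
    module
  have hy : unipotentSum R F * y = -c₂ • (unipotentSum R F * elDm R F) := by
    simp only [y, mul_sub, mul_smul_comm, unipotentSum_mul_elA, unipotentSum_mul_elDp, h]
    module
  rw [hπ, mul_sub, ← mul_assoc, hy, smul_mul_assoc, mul_assoc,
    show elDm R F * of R _ weyl = elEm R F from suppClass_mul_of_weyl R _ _ _ _,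
    ← unipotentSum_mul_elDm_eq_mul_elEm, sub_self]

end Pi3

section Character

variable {R F : Type*} [Field R] [Field F] [Fintype F] [DecidableEq F]

theorem suppClass_mul_eq_smul_of_diag2_weyl_unipotentSum [NeZero (2 : R)]
    (x : MonoidAlgebra R SL(2, F))
    (hT : ∀ (a : F) (ha : a ≠ 0), of R _ (diag2 a ha) * x = x)
    (hW : of R _ weyl * x = -x) (hU : unipotentSum R F * x = 0) :
    elA R F * x = ((Fintype.card F : R) - 1) • x ∧
    elB R F * x = (1 - (Fintype.card F : R)) • x ∧
    elC R F * x = 0 ∧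
    elDp R F * x = (1 - (Fintype.card F : R)) • x ∧
    elDm R F * x = (1 - (Fintype.card F : R)) • x ∧
    elEp R F * x = ((Fintype.card F : R) - 1) • x ∧
    elEm R F * x = ((Fintype.card F : R) - 1) • x := by
  have hA : elA R F * x = ((Fintype.card F : R) - 1) • x := by
    rw [elA_eq_sum_diag2, Finset.sum_mul, Finset.sum_congr rfl fun t _ => hT _ _,
      Finset.sum_const, Finset.card_univ, Fintype.card_units, ← Nat.cast_smul_eq_nsmul R,
      Nat.cast_pred Fintype.card_pos]
  have hB : elB R F * x = (1 - (Fintype.card F : R)) • x := by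
    rw [show elB R F = of R _ weyl * elA R F from (of_weyl_mul_suppClass R _ _ _ _).symm,
      mul_assoc, hA, mul_smul_comm, hW]
    module
  have hDp : elDp R F * x = (1 - (Fintype.card F : R)) • x := by
    rw [elDp_eq_unipotentSum_mul_elA_sub, sub_mul, mul_assoc, hA, mul_smul_comm, hU]
    module
  have hEp : elEp R F * x = ((Fintype.card F : R) - 1) • x := by
    rw [show elEp R F = elDp R F * of R _ weyl from (suppClass_mul_of_weyl R _ _ _ _).symm,
      mul_assoc, hW, mul_neg, hDp]
    module
  have hEm : elEm R F * x = ((Fintype.card F : R) - 1) • x := by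
    rw [show elEm R F = of R _ weyl * elDp R F from (of_weyl_mul_suppClass R _ _ _ _).symm,
      mul_assoc, hDp, mul_smul_comm, hW]
    module
  have hDm : elDm R F * x = (1 - (Fintype.card F : R)) • x := by
    rw [show elDm R F = of R _ weyl * elEp R F from (of_weyl_mul_suppClass R _ _ _ _).symm,
      mul_assoc, hEp, mul_smul_comm, hW]
    module
  have hG : (∑ g, of R _ g) * x = 0 := by
    have h : (2 : R) • ((∑ g, of R _ g) * x) = 0 := by
      conv_lhs =>
        rw [two_smul]; enter [2]; rw [← sum_univ_of_mul_of weyl, mul_assoc, hW, mul_neg]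
      exact add_neg_cancel _
    exact (smul_eq_zero.1 h).resolve_left two_ne_zero
  have hC : elC R F * x = 0 := by
    simp only [sum_univ_of_eq_sum_suppClass, add_mul, hA, hB, hDp, hDm, hEp, hEm] at hG
    linear_combination (norm := module) hG
  exact ⟨hA, hB, hC, hDp, hDm, hEp, hEm⟩

end Character

end SL2SupportClass

open SL2SupportClass

theorem pi3_character_general (F : Type*) [Field F] [Fintype F] [DecidableEq F]
    (q : ℚ) (hqc : q = Fintype.card F)
    (π₃ : MonoidAlgebra ℚ (Matrix.SpecialLinearGroup (Fin 2) F))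
    (hπ₃ : π₃ = (2 * (q + 1))⁻¹ • (elA ℚ F - elB ℚ F) +
      (2 * (q ^ 2 - 1))⁻¹ • (-elDp ℚ F - elDm ℚ F + elEp ℚ F + elEm ℚ F)) :
    elA ℚ F * π₃ = (q - 1) • π₃ ∧
    elB ℚ F * π₃ = (1 - q) • π₃ ∧
    elC ℚ F * π₃ = 0 ∧
    elDp ℚ F * π₃ = (1 - q) • π₃ ∧
    elDm ℚ F * π₃ = (1 - q) • π₃ ∧
    elEp ℚ F * π₃ = (q - 1) • π₃ ∧
    elEm ℚ F * π₃ = (q - 1) • π₃ := by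
  subst hqc
  have hq : (1 : ℚ) < Fintype.card F := by exact_mod_cast Fintype.one_lt_card
  have hc : (2 * ((Fintype.card F : ℚ) + 1))⁻¹ =
      ((Fintype.card F : ℚ) - 1) * (2 * ((Fintype.card F : ℚ) ^ 2 - 1))⁻¹ := by
    have : (Fintype.card F : ℚ) ^ 2 - 1 ≠ 0 := by nlinarith
    field_simp
    ring
  rw [show π₃ = pi3Combination ℚ F _ _ from hπ₃]
  exact suppClass_mul_eq_smul_of_diag2_weyl_unipotentSum _
    (fun _ => of_diag2_mul_pi3Combination _ _) (of_weyl_mul_pi3Combination _ _)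
    (unipotentSum_mul_pi3Combination hc)

theorem pi3_character (F : Type*) [Field F] [Fintype F] [DecidableEq F]
    (hq : 2 < Fintype.card F) (q : ℚ) (hqc : q = Fintype.card F)
    (π₃ : MonoidAlgebra ℚ (Matrix.SpecialLinearGroup (Fin 2) F))
    (hπ₃ : π₃ = (2 * (q + 1))⁻¹ • (elA ℚ F - elB ℚ F) +
      (2 * (q ^ 2 - 1))⁻¹ • (-elDp ℚ F - elDm ℚ F + elEp ℚ F + elEm ℚ F)) :
    elA ℚ F * π₃ = (q - 1) • π₃ ∧
    elB ℚ F * π₃ = (1 - q) • π₃ ∧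
    elC ℚ F * π₃ = 0 ∧
    elDp ℚ F * π₃ = (1 - q) • π₃ ∧
    elDm ℚ F * π₃ = (1 - q) • π₃ ∧
    elEp ℚ F * π₃ = (q - 1) • π₃ ∧
    elEm ℚ F * π₃ = (q - 1) • π₃ :=
  pi3_character_general F q hqc π₃ hπ₃
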